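/- arXiv:1301.7592 — 7 statements merged into one kernel-verified Lean document; each statement's English description precedes it below -/
import Mathlib

section
/- Social network games satisfy the join-the-crowd property: if joint strategies s¹ and s² agree on player i with s¹_i = s²_i = t, and every player choosing t in s¹ also chooses t in s², then p_i(s²) ≥ p_i(s¹). -/
open scoped Classical
noncomputable section

/-- A social network: weighted directed graph, product assignment, thresholds. -/
structure SN (V P : Type) [Fintype V] where
  /-- `E j i` : there is an edge from `j` to `i` (so `j` is a neighbour of `i`). -/
  E : V → V → Prop
  /-- `w j i` is the weight of the edge from `j` to `i`. -/
  w : V → V → ℝ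
  /-- The product set of each node (nonempty). -/
  Pr : V → Set P
  /-- Threshold function. -/
  theta : V → P → ℝ
  PrNe : ∀ i, (Pr i).Nonempty
  wNonneg : ∀ j i, 0 ≤ w j i
  wLeOne : ∀ j i, w j i ≤ 1
  wSumLeOne : ∀ i, (∑ j ∈ Finset.univ.filter (fun j => E j i), w j i) ≤ 1
  thetaPos : ∀ i t, 0 < theta i t
  thetaLeOne : ∀ i t, theta i t ≤ 1

namespace SN

variable {V P : Type} [Fintype V]

/-- A source node has no in-neighbours. -/
def isSource (N : SN V P) (i : V) : Prop := ∀ j, ¬ N.E j i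

/-- A joint strategy is valid if every chosen product belongs to the player's product set
(`none` is the abstention strategy `t₀`). -/
def valid (N : SN V P) (s : V → Option P) : Prop :=
  ∀ i t, s i = some t → t ∈ N.Pr i

/-- `a` is an admissible strategy for player `i`. -/
def validMove (N : SN V P) (i : V) (a : Option P) : Prop :=
  ∀ t, a = some t → t ∈ N.Pr i

/-- The payoff of player `i` in the social network game (with constant `c0` for sources). -/
def payoff (N : SN V P) (c0 : ℝ) (s : V → Option P) (i : V) : ℝ :=
  match s i with
  | none => 0
  | some t =>
    if N.isSource i then c0
    else (∑ j ∈ Finset.univ.filter (fun j => N.E j i ∧ s j = some t), N.w j i) - N.theta i t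

/-- Nash equilibrium of the social network game. -/
def Nash [DecidableEq V] (N : SN V P) (c0 : ℝ) (s : V → Option P) : Prop :=
  N.valid s ∧ ∀ i a, N.validMove i a →
    N.payoff c0 (Function.update s i a) i ≤ N.payoff c0 s i

/-- A profitable deviation from `s` to `s'`. -/
def profDev [DecidableEq V] (N : SN V P) (c0 : ℝ) (s s' : V → Option P) : Prop :=
  ∃ i a, N.validMove i a ∧ s' = Function.update s i a ∧
    N.payoff c0 s i < N.payoff c0 s' i

/-- A finite improvement path from `s` to `s'` (a sequence of profitable deviations). -/
def impPath [DecidableEq V] (N : SN V P) (c0 : ℝ) (s s' : V → Option P) : Prop :=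
  ∃ k, ∃ σ : Fin (k+1) → (V → Option P), σ 0 = s ∧ σ (Fin.last k) = s' ∧
    ∀ m : Fin k, N.profDev c0 (σ m.castSucc) (σ m.succ)

/-- `N'` results from `N` by adding product `t` to the product set of node `i`. -/
def expansionAt (N N' : SN V P) (i : V) (t : P) : Prop :=
  N'.E = N.E ∧ N'.w = N.w ∧ N'.theta = N.theta ∧ t ∉ N.Pr i ∧
  N'.Pr = Function.update N.Pr i (insert t (N.Pr i)) ∧ ∀ j, j ≠ i → N'.Pr j = N.Pr j

/-- `N'` is an expansion of `N`. -/
def expansion (N N' : SN V P) : Prop := ∃ i t, expansionAt N N' i t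

/-- `N'` results from `N` by removing product `t` from the product set of node `i`. -/
def contractionAt (N N' : SN V P) (i : V) (t : P) : Prop :=
  N'.E = N.E ∧ N'.w = N.w ∧ N'.theta = N.theta ∧ t ∈ N.Pr i ∧
  N'.Pr = Function.update N.Pr i (N.Pr i \ {t})

/-- The underlying graph is the simple cycle `0 → 1 → ⋯ → (n-1) → 0`. -/
def simpleCycle {n : ℕ} [NeZero n] (N : SN (Fin n) P) : Prop :=
  ∀ j i, N.E j i ↔ i = j + 1

end SN

/-- the join-the-crowd property of social network games: if `s¹` and `s²`
agree on player `i` with `s¹ᵢ = s²ᵢ = t`, and every player choosing `t` in `s¹` also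
chooses `t` in `s²`, then `pᵢ(s²) ≥ pᵢ(s¹)`. -/
theorem stmt2 {V P : Type} [Fintype V] (N : SN V P) (c0 : ℝ)
    (s1 s2 : V → Option P) (i : V) (t : P)
    (h1 : s1 i = some t) (h2 : s2 i = some t)
    (hsub : ∀ j, s1 j = some t → s2 j = some t) :
    N.payoff c0 s1 i ≤ N.payoff c0 s2 i := by
  unfold SN.payoff
  rw [h1, h2]
  simp only
  split
  · exact le_refl _
  · apply sub_le_sub_right
    apply Finset.sum_le_sum_of_subset_of_nonneg
    · intro j hj
      simp only [Finset.mem_filter] at *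
      exact ⟨hj.1, hj.2.1, hsub j hj.2.2⟩
    · intro j _ _
      exact N.wNonneg j i
end
end

section
/- In a two-product social network game, if product t₁ is a best response for player i to s¹_{−i}, and s² is obtained from s¹ by having some other players switch their strategies to t₁, then t₁ is still a best response for player i to s²_{−i}. -/
open scoped Classical
noncomputable section

/-- in a two-product game satisfying the join-the-crowd property
(payoffs depend only on one's own strategy and the set of its adopters, monotonically),
if `t₁` is a best response for player `i` to `s¹₋ᵢ` and `s²` is obtained from `s¹` by
having some other players switch to `t₁`, then `t₁` is still a best response for `i`
to `s²₋ᵢ`. -/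
theorem stmt3 {ι T : Type} [Fintype ι] [DecidableEq ι]
    (t0 t1 t2 : T) (hT : ∀ x : T, x = t0 ∨ x = t1 ∨ x = t2)
    (S : ι → Set T) (hS0 : ∀ i, t0 ∈ S i)
    (p : (ι → T) → ι → ℝ)
    -- payoff depends only on own strategy and the set of players adopting it:
    (hdep : ∀ s s' : ι → T, ∀ i, s i = s' i →
      {j | s j = s i} = {j | s' j = s' i} → p s i = p s' i)
    -- monotone (weakly increasing) dependence on the set of adopters:
    (hmono : ∀ s s' : ι → T, ∀ i, s i = s' i →
      {j | s j = s i} ⊆ {j | s' j = s' i} → p s i ≤ p s' i)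
    (s1 s2 : ι → T) (i : ι) (ht1 : t1 ∈ S i)
    -- t₁ is a best response for i to s¹₋ᵢ:
    (hbr : ∀ a ∈ S i, p (Function.update s1 i a) i ≤ p (Function.update s1 i t1) i)
    -- s² is obtained from s¹ by having some players other than i switch to t₁:
    (hswitch : ∀ j, s2 j = s1 j ∨ s2 j = t1) (hfix : s2 i = s1 i) :
    ∀ a ∈ S i, p (Function.update s2 i a) i ≤ p (Function.update s2 i t1) i := by
  intro a ha
  by_cases hat : a = t1
  · subst hat; exact le_refl _
  · have h1 : p (Function.update s2 i a) i ≤ p (Function.update s1 i a) i := by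
      apply hmono
      · simp
      · intro j hj
        simp only [Set.mem_setOf_eq, Function.update_self] at *
        by_cases hji : j = i
        · subst hji; simp
        · simp only [Function.update_of_ne hji] at hj ⊢
          rcases hswitch j with h | h
          · rw [← h]; exact hj
          · exact absurd (hj.symm.trans h) hat
    have h2 : p (Function.update s1 i t1) i ≤ p (Function.update s2 i t1) i := by
      apply hmono
      · simp
      · intro j hj
        simp only [Set.mem_setOf_eq, Function.update_self] at *
        by_cases hji : j = i
        · subst hji; simp
        · simp only [Function.update_of_ne hji] at hj ⊢
          rcases hswitch j with h | h
          · rw [h]; exact hj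
          · exact h
    exact le_trans (le_trans h1 (hbr a ha)) h2
end
end

section
/- When there are only two products, no social network is ∀w-vulnerable: for every Nash equilibrium s of the game on S and every expansion S' of S (adding one product to one node's product set), there exists a finite improvement path in the game on S' starting from s that ends in a Nash equilibrium s' such that s' is not weakly worse than s (i.e., it is not the case that every player's payoff weakly decreases and some player's payoff strictly decreases). -/
open scoped Classical
noncomputable section

/-!
Let the expansion add `t` to the products of `i` and let `u` be the other product. If `s` is
still an equilibrium there is nothing to do; otherwise, as `s` was an equilibrium before, some
player profits from switching to `t`, and does so. From there, let players with negative payoff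
(necessarily on `u`) abstain and let players switch to `t` whenever that is profitable. Along
these steps the supporters of `t` only grow and those of `u` only shrink, so no player off `u`
ever wants to abstain or to adopt `u`, and every step lowers one player's rank in the order
`u > abstain > t`. The path therefore ends in an equilibrium, where the first deviator earns at
least its payoff right after switching, which is strictly more than in `s`.
-/

open Function Finset

theorem exists_reflTransGen_of_measure_lt {α : Type*} {r : α → α → Prop} {p q : α → Prop}
    (f : α → ℕ) (hstep : ∀ a, p a → ¬ q a → ∃ b, r a b ∧ p b ∧ f b < f a) {a : α}
    (ha : p a) : ∃ b, Relation.ReflTransGen r a b ∧ p b ∧ q b := by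
  induction hf : f a using Nat.strong_induction_on generalizing a with
  | _ n ih =>
    by_cases hq : q a
    · exact ⟨a, .refl, ha, hq⟩
    obtain ⟨b, hab, hb, hlt⟩ := hstep a ha hq
    obtain ⟨c, hbc, hc, hqc⟩ := ih (f b) (hf ▸ hlt) hb rfl
    exact ⟨c, .head hab hbc, hc, hqc⟩

namespace SN

variable {V P : Type}

def Advances (t u : P) (s s' : V → Option P) : Prop :=
  (∀ j, s j = some t → s' j = some t) ∧ ∀ j, s' j = some u → s j = some u

theorem Advances.refl {t u : P} (s : V → Option P) : Advances t u s s :=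
  ⟨fun _ => id, fun _ => id⟩

theorem Advances.trans {t u : P} {s s' s'' : V → Option P} (h : Advances t u s s')
    (h' : Advances t u s' s'') : Advances t u s s'' :=
  ⟨fun j hj => h'.1 j (h.1 j hj), fun j hj => h.2 j (h'.2 j hj)⟩

theorem advances_update [DecidableEq V] {t u : P} {s : V → Option P} {k : V} {a : Option P}
    (ht : s k = some t → a = some t) (hu : a = some u → s k = some u) :
    Advances t u s (update s k a) := by
  constructor <;> intro j hj <;> by_cases hjk : j = k
  · subst hjk
    rw [update_self]
    exact ht hj
  · rwa [update_of_ne hjk]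
  · subst hjk
    rw [update_self] at hj
    exact hu hj
  · rwa [update_of_ne hjk] at hj

variable [Fintype V]

section

variable (N : SN V P) (c0 : ℝ)

theorem payoff_of_eq_none {s : V → Option P} {j : V} (h : s j = none) : N.payoff c0 s j = 0 := by
  simp only [payoff, h]

theorem payoff_le_of_supporters_subset {s s' : V → Option P} {j : V} {x : P}
    (hj : s j = some x) (hj' : s' j = some x) (hsub : ∀ k, s k = some x → s' k = some x) :
    N.payoff c0 s j ≤ N.payoff c0 s' j := by
  simp only [payoff, hj, hj']
  split_ifs
  · rfl
  · gcongr ?_ - _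
    exact sum_le_sum_of_subset_of_nonneg
      (monotone_filter_right _ fun k _ ⟨hE, hk⟩ => ⟨hE, hsub k hk⟩)
      fun k _ _ => N.wNonneg k j

end

theorem Advances.payoff_le {N : SN V P} {c0 : ℝ} {t u : P} {s s' : V → Option P}
    (h : Advances t u s s') {j : V} (hj : s j = some t) : N.payoff c0 s j ≤ N.payoff c0 s' j :=
  N.payoff_le_of_supporters_subset c0 hj (h.1 j hj) h.1

theorem payoff_eq_of_eq (N N' : SN V P) (hE : N'.E = N.E) (hw : N'.w = N.w)
    (hθ : N'.theta = N.theta) : N'.payoff = N.payoff := by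
  cases N
  cases N'
  subst hE hw hθ
  rfl

namespace expansionAt

variable {N N' : SN V P} {i : V} {t : P}

theorem payoff_eq (h : N.expansionAt N' i t) : N'.payoff = N.payoff :=
  payoff_eq_of_eq N N' h.1 h.2.1 h.2.2.1

theorem Pr_subset (h : N.expansionAt N' i t) (j : V) : N.Pr j ⊆ N'.Pr j := by
  by_cases hj : j = i
  · subst hj
    simp only [h.2.2.2.2.1, update_self, Set.subset_insert]
  · rw [h.2.2.2.2.2 j hj]

theorem mem_Pr_of_ne (h : N.expansionAt N' i t) {j : V} {x : P} (hx : x ≠ t)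
    (hxj : x ∈ N'.Pr j) : x ∈ N.Pr j := by
  by_cases hj : j = i
  · subst hj
    simpa [h.2.2.2.2.1, hx] using hxj
  · rwa [h.2.2.2.2.2 j hj] at hxj

end expansionAt

theorem valid.mono {N N' : SN V P} {s : V → Option P} (hs : N.valid s)
    (hPr : ∀ j, N.Pr j ⊆ N'.Pr j) : N'.valid s :=
  fun j x hx => hPr j (hs j x hx)

def strategyRank (t : P) : Option P → ℕ
  | none => 1
  | some x => if x = t then 0 else 2

def potential (t : P) (s : V → Option P) : ℕ := ∑ j, strategyRank t (s j)

variable [DecidableEq V]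

theorem potential_update_lt {t : P} {s : V → Option P} {k : V} {a : Option P}
    (h : strategyRank t a < strategyRank t (s k)) : potential t (update s k a) < potential t s := by
  refine sum_lt_sum (fun j _ => ?_) ⟨k, mem_univ k, by rwa [update_self]⟩
  by_cases hj : j = k
  · subst hj
    rw [update_self]
    exact h.le
  · rw [update_of_ne hj]

theorem valid.update {N : SN V P} {s : V → Option P} (hs : N.valid s) {k : V} {a : Option P}
    (ha : N.validMove k a) : N.valid (update s k a) := by
  intro j x hx
  by_cases hj : j = k
  · subst hj
    rw [update_self] at hx
    exact ha x hx
  · rw [update_of_ne hj] at hx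
    exact hs j x hx

theorem impPath_of_reflTransGen {N : SN V P} {c0 : ℝ} {s s' : V → Option P}
    (h : Relation.ReflTransGen (N.profDev c0) s s') : N.impPath c0 s s' := by
  induction h using Relation.ReflTransGen.head_induction_on with
  | refl => exact ⟨0, fun _ => s', rfl, rfl, fun m => m.elim0⟩
  | head hdev _ ih =>
    obtain ⟨k, σ, h0, hlast, hstep⟩ := ih
    refine ⟨k + 1, Fin.cons _ σ, rfl, by rwa [← Fin.succ_last, Fin.cons_succ], fun m => ?_⟩
    induction m using Fin.cases with
    | zero => simpa [h0] using hdev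
    | succ m => simpa [← Fin.succ_castSucc] using hstep m

theorem payoff_update_none (N : SN V P) (c0 : ℝ) (s : V → Option P) (j : V) :
    N.payoff c0 (update s j none) j = 0 :=
  N.payoff_of_eq_none c0 (update_self j none s)

variable {N : SN V P} {c0 : ℝ} {s : V → Option P}

theorem exists_lt_payoff_update_of_not_nash (hs : N.valid s) (hN : ¬ N.Nash c0 s) :
    ∃ k a, N.validMove k a ∧ N.payoff c0 s k < N.payoff c0 (update s k a) k := by
  by_contra! h
  exact hN ⟨hs, h⟩

theorem Nash.payoff_nonneg (hs : N.Nash c0 s) (j : V) : 0 ≤ N.payoff c0 s j := by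
  simpa only [payoff_update_none] using hs.2 j none fun _ h => nomatch h

theorem Advances.payoff_update_some_le {t u : P} {s' : V → Option P} (h : Advances t u s s')
    (j : V) : N.payoff c0 (update s' j (some u)) j ≤ N.payoff c0 (update s j (some u)) j := by
  refine N.payoff_le_of_supporters_subset c0 (update_self ..) (update_self ..) fun k hk => ?_
  by_cases hkj : k = j
  · subst hkj
    exact update_self ..
  · rw [update_of_ne hkj] at hk ⊢
    exact h.2 k hk

def Settled (N : SN V P) (c0 : ℝ) (u : P) (s : V → Option P) : Prop :=
  ∀ j, s j ≠ some u → 0 ≤ N.payoff c0 s j ∧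
    (u ∈ N.Pr j → N.payoff c0 (update s j (some u)) j ≤ N.payoff c0 s j)

theorem Nash.settled (hs : N.Nash c0 s) (u : P) : N.Settled c0 u s :=
  fun j _ => ⟨hs.payoff_nonneg j, fun hu => hs.2 j _ fun _ hx => Option.some.inj hx ▸ hu⟩

namespace Settled

variable {t u : P}

theorem of_payoff_eq {N' : SN V P} (h : N.Settled c0 u s) (hpay : N'.payoff = N.payoff)
    (hPr : ∀ j, u ∈ N'.Pr j → u ∈ N.Pr j) : N'.Settled c0 u s := by
  intro j hj
  rw [hpay]
  exact ⟨(h j hj).1, fun hu => (h j hj).2 (hPr j hu)⟩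

theorem payoff_update_some_le (h : N.Settled c0 u s) {k : V} (hu : u ∈ N.Pr k) :
    N.payoff c0 (update s k (some u)) k ≤ N.payoff c0 s k := by
  by_cases hk : s k = some u
  · rw [← hk, update_eq_self]
  · exact (h k hk).2 hu

theorem eq_some_of_payoff_neg (h : N.Settled c0 u s) {k : V} (hk : N.payoff c0 s k < 0) :
    s k = some u := by
  by_contra hne
  exact (h k hne).1.not_gt hk

variable (hall : ∀ x : P, x = t ∨ x = u)
include hall

theorem update_of_advances (h : N.Settled c0 u s) {k : V} {a : Option P}
    (hadv : Advances t u s (update s k a))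
    (hk : a ≠ some u → 0 ≤ N.payoff c0 (update s k a) k ∧
      (u ∈ N.Pr k → N.payoff c0 (update s k (some u)) k ≤ N.payoff c0 (update s k a) k)) :
    N.Settled c0 u (update s k a) := by
  intro j hj
  by_cases hjk : j = k
  · subst hjk
    rw [update_self] at hj
    rw [update_idem]
    exact hk hj
  have hsj : update s k a j = s j := update_of_ne hjk ..
  rw [hsj] at hj
  have hle : N.payoff c0 s j ≤ N.payoff c0 (update s k a) j := by
    rcases hs : s j with _ | x
    · rw [N.payoff_of_eq_none c0 hs, N.payoff_of_eq_none c0 (hsj.trans hs)]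
    · rcases hall x with rfl | rfl
      · exact hadv.payoff_le hs
      · exact absurd hs hj
  exact ⟨(h j hj).1.trans hle,
    fun hu => (hadv.payoff_update_some_le j).trans (((h j hj).2 hu).trans hle)⟩

theorem eq_some_of_lt (h : N.Settled c0 u s) (hnn : ∀ j, 0 ≤ N.payoff c0 s j) {k : V}
    {a : Option P} (ha : N.validMove k a) (hlt : N.payoff c0 s k < N.payoff c0 (update s k a) k) :
    a = some t := by
  rcases a with _ | x
  · rw [payoff_update_none] at hlt
    exact absurd hlt (hnn k).not_gt
  · rcases hall x with rfl | rfl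
    · rfl
    · exact absurd hlt (h.payoff_update_some_le (ha _ rfl)).not_gt

variable (htu : t ≠ u)
include htu

theorem update_none_of_neg (h : N.Settled c0 u s) {k : V} (hk : N.payoff c0 s k < 0) :
    N.Settled c0 u (update s k none) := by
  have hsk := h.eq_some_of_payoff_neg hk
  refine h.update_of_advances hall (advances_update (fun h => by simp_all) nofun) fun _ => ?_
  rw [payoff_update_none, ← hsk, update_eq_self]
  exact ⟨le_rfl, fun _ => hk.le⟩

theorem update_some_of_lt (h : N.Settled c0 u s) (hnn : ∀ j, 0 ≤ N.payoff c0 s j) {k : V}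
    (hlt : N.payoff c0 s k < N.payoff c0 (update s k (some t)) k) :
    N.Settled c0 u (update s k (some t)) :=
  h.update_of_advances hall (advances_update (fun _ => rfl) fun h => absurd h (by simpa))
    fun _ => ⟨(hnn k).trans hlt.le, fun hu => (h.payoff_update_some_le hu).trans hlt.le⟩

/-- The two kinds of profitable deviation from a settled profile: a player on `u` with negative
payoff abstains, or a player switches to `t`. -/
theorem exists_profDev_of_not_nash (h : N.Settled c0 u s) (hs : N.valid s)
    (hN : ¬ N.Nash c0 s) : ∃ s', N.profDev c0 s s' ∧ N.valid s' ∧ N.Settled c0 u s' ∧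
      Advances t u s s' ∧ potential t s' < potential t s := by
  by_cases hneg : ∃ k, N.payoff c0 s k < 0
  · obtain ⟨k, hk⟩ := hneg
    have hsk := h.eq_some_of_payoff_neg hk
    refine ⟨_, ⟨k, none, nofun, rfl, by rwa [payoff_update_none]⟩, hs.update nofun,
      h.update_none_of_neg hall htu hk, advances_update (fun h => by simp_all) nofun,
      potential_update_lt ?_⟩
    simp [strategyRank, hsk, htu.symm]
  · simp only [not_exists, not_lt] at hneg
    obtain ⟨k, a, ha, hlt⟩ := exists_lt_payoff_update_of_not_nash hs hN
    obtain rfl := h.eq_some_of_lt hall hneg ha hlt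
    have hsk : s k ≠ some t := fun hsk => by
      rw [← hsk, update_eq_self] at hlt
      exact hlt.false
    refine ⟨_, ⟨k, _, ha, rfl, hlt⟩, hs.update ha, h.update_some_of_lt hall htu hneg hlt,
      advances_update (fun _ => rfl) fun h => absurd h (by simpa), potential_update_lt ?_⟩
    rcases hs : s k with _ | x
    · simp [strategyRank]
    · simp_all [strategyRank]

theorem exists_reflTransGen_nash (h : N.Settled c0 u s) (hs : N.valid s) :
    ∃ s', Relation.ReflTransGen (N.profDev c0) s s' ∧ N.Nash c0 s' ∧ Advances t u s s' := by
  obtain ⟨s', hpath, ⟨-, -, hadv⟩, hN⟩ := exists_reflTransGen_of_measure_lt (potential t)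
    (p := fun s' => N.valid s' ∧ N.Settled c0 u s' ∧ Advances t u s s') (q := N.Nash c0)
    (fun _ ⟨hv, hset, hadv⟩ hN =>
      let ⟨s'', hdev, hv', hset', hadv', hlt⟩ := hset.exists_profDev_of_not_nash hall htu hv hN
      ⟨s'', hdev, ⟨hv', hset', hadv.trans hadv'⟩, hlt⟩)
    ⟨hs, h, .refl s⟩
  exact ⟨s', hpath, hN, hadv⟩

end Settled

end SN

theorem stmt4_general {V P : Type} [Fintype V] [DecidableEq V] (N N' : SN V P)
    (t1 t2 : P) (hP : ∀ t : P, t = t1 ∨ t = t2)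
    (c0 : ℝ)
    (s : V → Option P) (hs : N.Nash c0 s) (hexp : N.expansion N') :
    ∃ s', N'.impPath c0 s s' ∧ N'.Nash c0 s' ∧
      ¬ ((∀ i, N'.payoff c0 s' i ≤ N.payoff c0 s i) ∧
         ∃ i, N'.payoff c0 s' i < N.payoff c0 s i) := by
  obtain ⟨i, t, hexp⟩ := hexp
  obtain ⟨u, hu⟩ := N.PrNe i
  have htu : t ≠ u := fun h => hexp.2.2.2.1 (h ▸ hu)
  have hall : ∀ x, x = t ∨ x = u := fun x => by
    have := hP t; have := hP u; have := hP x; grind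
  have hpay := hexp.payoff_eq
  have hvalid : N'.valid s := hs.1.mono hexp.Pr_subset
  have hset : N'.Settled c0 u s :=
    (hs.settled u).of_payoff_eq hpay fun _ => hexp.mem_Pr_of_ne htu.symm
  by_cases hN : N'.Nash c0 s
  · refine ⟨s, SN.impPath_of_reflTransGen .refl, hN, fun ⟨_, j, hj⟩ => ?_⟩
    rw [hpay] at hj
    exact hj.false
  have hnn : ∀ j, 0 ≤ N'.payoff c0 s j := by
    rw [hpay]
    exact hs.payoff_nonneg
  obtain ⟨k, a, ha, hlt⟩ := SN.exists_lt_payoff_update_of_not_nash hvalid hN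
  obtain rfl := hset.eq_some_of_lt hall hnn ha hlt
  obtain ⟨s', hpath, hN', hadv⟩ :=
    (hset.update_some_of_lt hall htu hnn hlt).exists_reflTransGen_nash hall htu (hvalid.update ha)
  refine ⟨s', SN.impPath_of_reflTransGen (.head ⟨k, _, ha, rfl, hlt⟩ hpath), hN',
    fun ⟨hle, _⟩ => ?_⟩
  have hgain := hlt.trans_le (hadv.payoff_le (update_self k (some t) s))
  rw [hpay] at hgain hle
  exact (hgain.trans_le (hle k)).false

/-- with only two products, no social network is ∀w-vulnerable: for every
Nash equilibrium `s` of `G(S)` and every expansion `S'`, some finite improvement path in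
`G(S')` starting from `s` ends in a Nash equilibrium `s'` that is not weakly worse
than `s`. -/
theorem stmt4 {V P : Type} [Fintype V] [DecidableEq V] (N N' : SN V P)
    (t1 t2 : P) (hP : ∀ t : P, t = t1 ∨ t = t2)
    (c0 : ℝ) (hc0 : 0 < c0)
    (s : V → Option P) (hs : N.Nash c0 s) (hexp : N.expansion N') :
    ∃ s', N'.impPath c0 s s' ∧ N'.Nash c0 s' ∧
      ¬ ((∀ i, N'.payoff c0 s' i ≤ N.payoff c0 s i) ∧
         ∃ i, N'.payoff c0 s' i < N.payoff c0 s i) :=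
  stmt4_general N N' t1 t2 hP c0 s hs hexp
end
end

section
/- Let S be a network whose underlying graph has no source nodes, and let s ≠ (t_0,...,t_0) be a Nash equilibrium of the social network game G(S). Then for every product t used in s (i.e., t ∈ prod(s)), there exists a minimal self-sustaining strongly connected subgraph C for t with C ⊆ A_t(s), where A_t(s) is the set of nodes choosing t in s. -/
open scoped Classical
noncomputable section

/-- Reachability within the induced subgraph on `C`. -/
def reachIn {V P : Type} [Fintype V] (N : SN V P) (C : Set V) (a b : V) : Prop :=
  Relation.ReflTransGen (fun x y => x ∈ C ∧ y ∈ C ∧ N.E x y) a b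

/-- `C` is a self-sustaining strongly connected subgraph for product `t`. -/
def sss {V P : Type} [Fintype V] (N : SN V P) (C : Set V) (t : P) : Prop :=
  C.Nonempty ∧ (∀ a ∈ C, ∀ b ∈ C, reachIn N C a b) ∧
  ∀ i ∈ C, t ∈ N.Pr i ∧
    N.theta i t ≤ ∑ j ∈ Finset.univ.filter (fun j => j ∈ C ∧ N.E j i), N.w j i

/-- `C` is a minimal self-sustaining SCS for `t`. -/
def minSss {V P : Type} [Fintype V] (N : SN V P) (C : Set V) (t : P) : Prop :=
  sss N C t ∧ ∀ C' : Set V, C' ⊂ C → ¬ sss N C' t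

/-- in a network without source nodes, if `s ≠ t̄₀` is a Nash equilibrium,
then for every product `t` used in `s` there is a minimal self-sustaining SCS `C` for `t`
with `C ⊆ A_t(s)`. -/
theorem stmt5 {V P : Type} [Fintype V] [DecidableEq V] (N : SN V P)
    (hnosrc : ∀ i, ¬ N.isSource i) (c0 : ℝ)
    (s : V → Option P) (hs : N.Nash c0 s) (hne : s ≠ fun _ => none) :
    ∀ t : P, (∃ i, s i = some t) →
      ∃ C : Set V, minSss N C t ∧ C ⊆ {i | s i = some t} := by

  have hval := hs.1
  intro t ht
  obtain ⟨i1, hi1⟩ := ht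
  classical
  set A : Set V := {i | s i = some t} with hAdef
  have hAmem : ∀ i, i ∈ A ↔ s i = some t := fun i => Iff.rfl
  -- Every node playing t has in-weight (within A) at least its threshold.
  have hpay : ∀ i ∈ A, N.theta i t ≤
      ∑ j ∈ Finset.univ.filter (fun j => j ∈ A ∧ N.E j i), N.w j i := by
    intro i hi
    have hvm : N.validMove i none := by intro t' h; cases h
    have h0 := hs.2 i none hvm
    have hupd : N.payoff c0 (Function.update s i none) i = 0 := by
      simp [SN.payoff]
    rw [hupd] at h0
    have hsi : s i = some t := hi
    have hpa : N.payoff c0 s i =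
        (∑ j ∈ Finset.univ.filter (fun j => N.E j i ∧ s j = some t), N.w j i) - N.theta i t := by
      simp [SN.payoff, hsi, hnosrc i]
    rw [hpa] at h0
    have hfe : Finset.univ.filter (fun j => j ∈ A ∧ N.E j i)
        = Finset.univ.filter (fun j => N.E j i ∧ s j = some t) := by
      apply Finset.filter_congr
      intro j _
      constructor
      · rintro ⟨h1, h2⟩; exact ⟨h2, h1⟩
      · rintro ⟨h1, h2⟩; exact ⟨h2, h1⟩
    rw [hfe]; linarith
  -- reachability preorder within A
  set r : V → V → Prop := reachIn N A with hrdef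
  have hwf : WellFounded (fun x y => r x y ∧ ¬ r y x) := by
    have ht : IsTrans V (fun x y => r x y ∧ ¬ r y x) :=
      ⟨fun a b c h1 h2 => ⟨Relation.ReflTransGen.trans h1.1 h2.1,
        fun h => h2.2 (Relation.ReflTransGen.trans h h1.1)⟩⟩
    have hi : IsIrrefl V (fun x y => r x y ∧ ¬ r y x) := ⟨fun a h => h.2 h.1⟩
    exact Finite.wellFounded_of_trans_of_irrefl _
  obtain ⟨i0, hi0A, hi0min⟩ := hwf.has_min A ⟨i1, hi1⟩
  have hmin : ∀ x ∈ A, r x i0 → r i0 x := by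
    intro x hx hr
    by_contra h
    exact hi0min x hx ⟨hr, h⟩
  set C0 : Set V := {x | r i0 x ∧ r x i0} with hC0def
  have hC0A : C0 ⊆ A := by
    rintro x ⟨hx1, hx2⟩
    rcases hx2.cases_head with h | ⟨y, hy, _⟩
    · exact h ▸ hi0A
    · exact hy.1
  have hclose : ∀ i ∈ C0, ∀ j ∈ A, N.E j i → j ∈ C0 := by
    intro i hi j hj hE
    have hji : r j i := Relation.ReflTransGen.single ⟨hj, hC0A hi, hE⟩
    have hji0 : r j i0 := hji.trans hi.2
    exact ⟨hmin j hj hji0, hji0⟩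
  have hto : ∀ x, r x i0 → (r i0 x → reachIn N C0 x i0) := by
    intro x hx
    refine Relation.ReflTransGen.head_induction_on hx ?_ ?_
    · intro _; exact Relation.ReflTransGen.refl
    · intro a c hac htail ih hi0a
      have hi0c : r i0 c := hi0a.trans (Relation.ReflTransGen.single hac)
      have haC : a ∈ C0 := ⟨hi0a, Relation.ReflTransGen.head hac htail⟩
      have hcC : c ∈ C0 := ⟨hi0c, htail⟩
      exact Relation.ReflTransGen.head ⟨haC, hcC, hac.2.2⟩ (ih hi0c)
  have hfrom : ∀ x, r i0 x → (r x i0 → reachIn N C0 i0 x) := by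
    intro x hx
    induction hx with
    | refl => intro _; exact Relation.ReflTransGen.refl
    | @tail b c hab hbc ih =>
      intro hc0
      have hb0 : r b i0 := Relation.ReflTransGen.head hbc hc0
      have hbC : b ∈ C0 := ⟨hab, hb0⟩
      have hcC : c ∈ C0 := ⟨hab.tail hbc, hc0⟩
      exact (ih hb0).tail ⟨hbC, hcC, hbc.2.2⟩
  have hC0sss : sss N C0 t := by
    refine ⟨⟨i0, Relation.ReflTransGen.refl, Relation.ReflTransGen.refl⟩, ?_, ?_⟩
    · intro a ha b hb
      exact (hto a ha.2 ha.1).trans (hfrom b hb.1 hb.2)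
    · intro i hi
      refine ⟨hval i t (hC0A hi), ?_⟩
      refine (hpay i (hC0A hi)).trans (le_of_eq ?_)
      refine Finset.sum_congr ?_ (fun _ _ => rfl)
      ext j
      simp only [Finset.mem_filter, Finset.mem_univ, true_and]
      constructor
      · rintro ⟨hj, hE⟩; exact ⟨hclose i hi j hj hE, hE⟩
      · rintro ⟨hj, hE⟩; exact ⟨hC0A hj, hE⟩
  -- minimality: pick a set of minimal cardinality among sss subsets of A
  have hex : ∃ n : ℕ, ∃ C : Set V, (sss N C t ∧ C ⊆ A) ∧ C.ncard = n :=
    ⟨C0.ncard, C0, ⟨hC0sss, hC0A⟩, rfl⟩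
  obtain ⟨C, ⟨hCsss, hCsub⟩, hCcard⟩ := Nat.find_spec hex
  refine ⟨C, ⟨hCsss, ?_⟩, hCsub⟩
  intro C' hC' hC'sss
  have hlt : C'.ncard < C.ncard := Set.ncard_lt_ncard hC' (Set.toFinite C)
  exact Nat.find_min hex (hCcard ▸ hlt)
    ⟨C', ⟨hC'sss, hC'.subset.trans hCsub⟩, rfl⟩
end
end

section
/- Let S be a network with no source nodes. If for any two distinct products t₁ and t₂, every minimal self-sustaining SCS for t₁ intersects every minimal self-sustaining SCS for t₂ (e.g., the intersection Y(S) of all minimal self-sustaining SCSs over all products is nonempty), then every Nash equilibrium s ≠ (t_0,...,t_0) of G(S) uses exactly one product: prod(s) = {t} for some t. -/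
open scoped Classical
noncomputable section

/-- In a Nash equilibrium with no source nodes, every used product has a minimal
self-sustaining SCS contained in its adopter set. -/
lemma nash_minSss {V P : Type} [Fintype V] [DecidableEq V] (N : SN V P)
    (hnosrc : ∀ i, ¬ N.isSource i) (c0 : ℝ) (s : V → Option P) (hs : N.Nash c0 s)
    {t : P} {v : V} (hv : s v = some t) :
    ∃ C : Set V, minSss N C t ∧ ∀ i ∈ C, s i = some t := by
  classical
  set A : Set V := {i | s i = some t} with hA
  have hvA : v ∈ A := hv
  -- Threshold bound from the Nash condition (deviating to `none` gives payoff 0).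
  have hthr : ∀ i ∈ A, N.theta i t ≤
      ∑ j ∈ Finset.univ.filter (fun j => N.E j i ∧ s j = some t), N.w j i := by
    intro i hi
    have hi' : s i = some t := hi
    have hvm : N.validMove i none := fun t h => by cases h
    have h := hs.2 i none hvm
    have h0 : N.payoff c0 (Function.update s i none) i = 0 := by
      unfold SN.payoff
      rw [Function.update_self]
    have hp : N.payoff c0 s i =
        (∑ j ∈ Finset.univ.filter (fun j => N.E j i ∧ s j = some t), N.w j i)
          - N.theta i t := by
      unfold SN.payoff
      rw [hi']
      exact if_neg (hnosrc i)
    rw [h0, hp] at h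
    linarith
  -- `R i` : nodes of `A` reaching `i` within `A`.
  set R : V → Set V := fun i => {j | j ∈ A ∧ reachIn N A j i} with hR
  obtain ⟨i₀, hi₀A, hmin⟩ := Set.exists_min_image A (fun i => (R i).ncard)
      (Set.toFinite A) ⟨v, hvA⟩
  set C : Set V := R i₀ with hC
  have hCA : C ⊆ A := fun j hj => hj.1
  have hi₀C : i₀ ∈ C := ⟨hi₀A, Relation.ReflTransGen.refl⟩
  have hRC : ∀ j ∈ C, R j = C := by
    intro j hj
    have hsub : R j ⊆ C := by
      rintro k ⟨hkA, hk⟩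
      exact ⟨hkA, hk.trans hj.2⟩
    exact Set.eq_of_subset_of_ncard_le hsub (hmin j (hCA hj)) (Set.toFinite C)
  -- `C` is closed under in-neighbours within `A`.
  have hclosed : ∀ i ∈ C, ∀ j ∈ A, N.E j i → j ∈ C := by
    intro i hi j hjA hE
    exact ⟨hjA, Relation.ReflTransGen.head ⟨hjA, hCA hi, hE⟩ hi.2⟩
  -- Paths within `A` ending in `C` stay within `C`.
  have hreach : ∀ a b : V, reachIn N A a b → b ∈ C → reachIn N C a b := by
    intro a b hab hbC
    induction hab using Relation.ReflTransGen.head_induction_on with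
    | refl => exact Relation.ReflTransGen.refl
    | head h htail ih =>
      rename_i x y
      have hyC : y ∈ C := ⟨h.2.1, Relation.ReflTransGen.trans htail hbC.2⟩
      have hxC : x ∈ C := ⟨h.1, Relation.ReflTransGen.head h hyC.2⟩
      exact Relation.ReflTransGen.head ⟨hxC, hyC, h.2.2⟩ ih
  have hsssC : sss N C t := by
    refine ⟨⟨i₀, hi₀C⟩, ?_, ?_⟩
    · intro a ha b hb
      have h2 : i₀ ∈ R b := (hRC b hb) ▸ hi₀C
      exact hreach a b (ha.2.trans h2.2) hb
    · intro i hi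
      refine ⟨hs.1 i t (hCA hi), ?_⟩
      have hth := hthr i (hCA hi)
      have hfil : Finset.univ.filter (fun j => N.E j i ∧ s j = some t)
          = Finset.univ.filter (fun j => j ∈ C ∧ N.E j i) := by
        apply Finset.filter_congr
        intro j _
        constructor
        · rintro ⟨hE, hj⟩; exact ⟨hclosed i hi j hj hE, hE⟩
        · rintro ⟨hj, hE⟩; exact ⟨hE, hCA hj⟩
      rw [hfil] at hth
      convert hth using 2
      ext j
      simp
  -- Extract a minimal SSS inside `C`.
  obtain ⟨D, ⟨hDC, hDsss⟩, hDmin⟩ := Set.exists_min_image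
      {D : Set V | D ⊆ C ∧ sss N D t} Set.ncard (Set.toFinite _)
      ⟨C, Set.Subset.rfl, hsssC⟩
  refine ⟨D, ⟨hDsss, ?_⟩, fun i hi => hCA (hDC hi)⟩
  intro C' hC' hsss'
  have h2 := hDmin C' ⟨hC'.1.trans hDC, hsss'⟩
  have h3 : C'.ncard < D.ncard := Set.ncard_lt_ncard hC' (Set.toFinite D)
  omega

/-- in a network without source nodes, if every minimal self-sustaining SCS
for a product `t₁` intersects every minimal self-sustaining SCS for a distinct product
`t₂`, then every Nash equilibrium `s ≠ t̄₀` uses exactly one product. -/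
theorem stmt7 {V P : Type} [Fintype V] [DecidableEq V] (N : SN V P)
    (hnosrc : ∀ i, ¬ N.isSource i) (c0 : ℝ)
    (hint : ∀ (t1 t2 : P), t1 ≠ t2 → ∀ C1 C2 : Set V,
      minSss N C1 t1 → minSss N C2 t2 → (C1 ∩ C2).Nonempty)
    (s : V → Option P) (hs : N.Nash c0 s) (hne : s ≠ fun _ => none) :
    ∃ t : P, (∃ i, s i = some t) ∧ ∀ i (p : P), s i = some p → p = t := by
  obtain ⟨i, hi⟩ : ∃ i, s i ≠ none := by
    by_contra h; push_neg at h; exact hne (funext fun i => h i)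
  obtain ⟨t, ht⟩ := Option.ne_none_iff_exists'.mp hi
  refine ⟨t, ⟨i, ht⟩, ?_⟩
  intro j p hp
  by_contra hpt
  obtain ⟨C1, hC1, hC1s⟩ := nash_minSss N hnosrc c0 s hs ht
  obtain ⟨C2, hC2, hC2s⟩ := nash_minSss N hnosrc c0 s hs hp
  obtain ⟨x, hx2, hx1⟩ := hint p t hpt C2 C1 hC2 hC1
  exact hpt (Option.some_injective _ ((hC2s x hx2).symm.trans (hC1s x hx1)))
end
end

section
/- There exists a simple cycle network S with three nodes that is ∃s-inefficient: there is a Nash equilibrium s of G(S) and a contraction S' of S (removing one product from one node) such that some improvement path in G(S') starting from s ends in a Nash equilibrium s' with p_i(s') > p_i(s) for every player i. -/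
open scoped Classical
noncomputable section

/-- An improvement path in the contracted network `N'` starting from a joint strategy `s`
of the original network, where product `t` was removed from node `i`'s product set:
if node `i` was playing the removed product `t` in `s`, the path must begin with node `i`
making a move to some admissible strategy (any such move is allowed); all other steps
are profitable deviations. -/
def cImpPath {V P : Type} [Fintype V] [DecidableEq V]
    (N' : SN V P) (c0 : ℝ) (i : V) (t : P) (s s' : V → Option P) : Prop :=
  ∃ k, ∃ σ : Fin (k+1) → (V → Option P), σ 0 = s ∧ σ (Fin.last k) = s' ∧
    ∀ m : Fin k,
      (((m : ℕ) = 0 ∧ s i = some t) →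
        ∃ a, N'.validMove i a ∧ σ m.succ = Function.update s i a) ∧
      (¬ ((m : ℕ) = 0 ∧ s i = some t) →
        N'.profDev c0 (σ m.castSucc) (σ m.succ))

namespace Stmt11

def myTheta : Fin 3 → Fin 2 → ℝ := fun _ t => if t = 0 then 1/2 else 1/4

lemma key (i : Fin 3) : ∀ j : Fin 3, (i = j + 1) = (j = i + 2) := by
  intro j
  apply propext
  constructor
  · intro h; subst h; fin_cases j <;> decide
  · intro h; subst h; fin_cases i <;> decide

def NN : SN (Fin 3) (Fin 2) where
  E := fun j i => i = j + 1
  w := fun _ _ => 1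
  Pr := fun _ => Set.univ
  theta := myTheta
  PrNe := fun _ => ⟨0, trivial⟩
  wNonneg := fun _ _ => zero_le_one
  wLeOne := fun _ _ => le_refl 1
  wSumLeOne := fun i => by
    rw [Finset.sum_filter]; simp only [key]; simp [Finset.sum_ite_eq']
  thetaPos := fun _ t => by fin_cases t <;> norm_num [myTheta]
  thetaLeOne := fun _ t => by fin_cases t <;> norm_num [myTheta]

def NN' : SN (Fin 3) (Fin 2) where
  E := fun j i => i = j + 1
  w := fun _ _ => 1
  Pr := Function.update (fun _ => (Set.univ : Set (Fin 2))) 0 (Set.univ \ {0})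
  theta := myTheta
  PrNe := fun i => by
    refine ⟨1, ?_⟩
    by_cases h : i = 0 <;> simp [Function.update, h]
  wNonneg := fun _ _ => zero_le_one
  wLeOne := fun _ _ => le_refl 1
  wSumLeOne := fun i => by
    rw [Finset.sum_filter]; simp only [key]; simp [Finset.sum_ite_eq']
  thetaPos := fun _ t => by fin_cases t <;> norm_num [myTheta]
  thetaLeOne := fun _ t => by fin_cases t <;> norm_num [myTheta]

lemma notSrc (N : SN (Fin 3) (Fin 2)) (hE : N.E = fun j i => i = j + 1) (i : Fin 3) :
    ¬ N.isSource i := by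
  intro h
  exact h (i + 2) (by rw [hE]; fin_cases i <;> decide)

lemma pay (N : SN (Fin 3) (Fin 2)) (hE : N.E = fun j i => i = j + 1)
    (hw : N.w = fun _ _ => 1) (hth : N.theta = myTheta)
    (s : Fin 3 → Option (Fin 2)) (i : Fin 3) (t : Fin 2) (hs : s i = some t) :
    N.payoff 1 s i = (if s (i + 2) = some t then 1 else 0) - myTheta i t := by
  simp only [SN.payoff, hs, if_neg (notSrc N hE i), hE, hw, hth]
  congr 1
  rw [Finset.sum_filter]
  simp only [key, ite_and]
  rw [Finset.sum_ite_eq' Finset.univ (i + 2) (fun x => if s x = some t then (1:ℝ) else 0)]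
  by_cases h : s (i + 2) = some t <;> simp [h]

lemma pay_none (N : SN (Fin 3) (Fin 2)) (s : Fin 3 → Option (Fin 2)) (i : Fin 3)
    (hs : s i = none) : N.payoff 1 s i = 0 := by
  simp [SN.payoff, hs]

def sA : Fin 3 → Option (Fin 2) := fun _ => some 0
def sB : Fin 3 → Option (Fin 2) := Function.update sA 0 (some 1)
def sC : Fin 3 → Option (Fin 2) := Function.update sB 1 (some 1)
def sD : Fin 3 → Option (Fin 2) := fun _ => some 1

lemma sB0 : sB 0 = some 1 := by simp [sB]
lemma sB1 : sB 1 = some 0 := by simp [sB, sA, Function.update]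
lemma sB2 : sB 2 = some 0 := by simp [sB, sA, Function.update]
lemma sC0 : sC 0 = some 1 := by simp [sC, Function.update, sB]
lemma sC1 : sC 1 = some 1 := by simp [sC]
lemma sC2 : sC 2 = some 0 := by simp [sC, Function.update, sB, sA]
lemma sD_eq : Function.update sC 2 (some 1) = sD := by
  funext i
  fin_cases i <;> simp [Function.update, sD, sC0, sC1]

end Stmt11

open Stmt11

/-- there is a simple cycle network with three nodes that is
∃s-inefficient: there are a Nash equilibrium `s` of `G(S)` and a contraction `S'`
(removing one product from one node) such that some improvement path in `G(S')`
starting from `s` (beginning with the affected node moving) ends in a Nash equilibrium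
`s'` in which every player's payoff strictly increased. -/
theorem stmt11 :
    ∃ (N N' : SN (Fin 3) (Fin 2)) (c0 : ℝ) (s s' : Fin 3 → Option (Fin 2))
      (i : Fin 3) (t : Fin 2),
      N.simpleCycle ∧ 0 < c0 ∧
      N.Nash c0 s ∧ N.contractionAt N' i t ∧
      cImpPath N' c0 i t s s' ∧ N'.Nash c0 s' ∧
      ∀ j, N.payoff c0 s j < N'.payoff c0 s' j := by
  refine ⟨NN, NN', 1, sA, sD, 0, 0, ?_, one_pos, ?_, ?_, ?_, ?_, ?_⟩
  · intro j i; exact Iff.rfl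
  · -- Nash of NN at sA
    refine ⟨fun i t _ => trivial, ?_⟩
    intro i a _
    have hpi : NN.payoff 1 sA i = 1/2 := by
      rw [pay NN rfl rfl rfl sA i 0 rfl]
      norm_num [sA, myTheta]
    rw [hpi]
    rcases a with _ | t
    · rw [pay_none NN _ i (by simp [Function.update])]
      norm_num
    · have hupd : Function.update sA i (some t) i = some t := by simp
      rw [pay NN rfl rfl rfl _ i t hupd]
      have h2 : Function.update sA i (some t) (i + 2) = some 0 := by
        rw [Function.update_of_ne (by fin_cases i <;> decide)]
        rfl
      rw [h2]
      fin_cases t <;> norm_num [myTheta]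
  · -- contraction
    refine ⟨rfl, rfl, rfl, Set.mem_univ 0, ?_⟩
    funext j
    by_cases h : j = 0 <;> simp [NN', NN, Function.update, h]
  · -- the improvement path
    refine ⟨3, ![sA, sB, sC, sD], rfl, rfl, ?_⟩
    intro m
    fin_cases m
    · refine ⟨fun _ => ⟨some 1, ?_, rfl⟩, fun h => absurd ⟨rfl, rfl⟩ h⟩
      intro t ht
      cases ht
      simp [NN', Function.update]
    · refine ⟨fun h => absurd h.1 one_ne_zero, fun _ => ⟨1, some 1, ?_, rfl, ?_⟩⟩
      · intro t ht
        cases ht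
        simp [NN', Function.update]
      · show NN'.payoff 1 sB 1 < NN'.payoff 1 sC 1
        rw [pay NN' rfl rfl rfl sB 1 0 sB1, pay NN' rfl rfl rfl sC 1 1 sC1]
        have h12 : (1 : Fin 3) + 2 = 0 := by decide
        rw [h12, sB0, sC0]
        norm_num [myTheta]
    · refine ⟨fun h => absurd h.1 (by norm_num), fun _ => ⟨2, some 1, ?_, sD_eq.symm, ?_⟩⟩
      · intro t ht
        cases ht
        simp [NN', Function.update]
      · show NN'.payoff 1 sC 2 < NN'.payoff 1 sD 2
        rw [pay NN' rfl rfl rfl sC 2 0 sC2, pay NN' rfl rfl rfl sD 2 1 rfl]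
        have h22 : (2 : Fin 3) + 2 = 1 := by decide
        rw [h22, sC1]
        norm_num [sD, myTheta]
  · -- Nash of NN' at sD
    refine ⟨?_, ?_⟩
    · intro i t ht
      cases ht
      by_cases h : i = 0 <;> simp [NN', Function.update, h]
    · intro i a ha
      have hpi : NN'.payoff 1 sD i = 3/4 := by
        rw [pay NN' rfl rfl rfl sD i 1 rfl]
        norm_num [sD, myTheta]
      rw [hpi]
      rcases a with _ | t
      · rw [pay_none NN' _ i (by simp [Function.update])]
        norm_num
      · have hupd : Function.update sD i (some t) i = some t := by simp
        rw [pay NN' rfl rfl rfl _ i t hupd]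
        have h2 : Function.update sD i (some t) (i + 2) = some 1 := by
          rw [Function.update_of_ne (by fin_cases i <;> decide)]
          rfl
        rw [h2]
        fin_cases t
        · -- t = 0: either invalid (i = 0) or payoff drops
          by_cases h : i = 0
          · exfalso
            have := ha 0 rfl
            rw [h] at this
            simp [NN', Function.update] at this
          · norm_num [myTheta]
        · norm_num [myTheta]
  · intro j
    rw [pay NN rfl rfl rfl sA j 0 rfl, pay NN' rfl rfl rfl sD j 1 rfl]
    norm_num [sA, sD, myTheta]
end
end

section
/- If a network's underlying graph has a source node, then the network is not ∃s-vulnerable: there is no Nash equilibrium s, expansion S', and improvement path in G(S') from s ending in a Nash equilibrium s' with p_i(s) > p_i(s') for all players i. -/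
open scoped Classical
noncomputable section

lemma sourceNashPayoff {V P : Type} [Fintype V] [DecidableEq V] (N : SN V P)
    (c0 : ℝ) (hc0 : 0 < c0) {i : V} (hi : N.isSource i) {s : V → Option P}
    (hs : N.Nash c0 s) : N.payoff c0 s i = c0 := by
  cases h : s i with
  | none =>
    exfalso
    obtain ⟨t, ht⟩ := N.PrNe i
    have hvm : N.validMove i (some t) := by
      intro t' ht'; cases ht'; exact ht
    have := hs.2 i (some t) hvm
    have hup : N.payoff c0 (Function.update s i (some t)) i = c0 := by
      unfold SN.payoff
      rw [Function.update_self]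
      simp [hi]
    have hpi : N.payoff c0 s i = 0 := by unfold SN.payoff; rw [h]
    rw [hup, hpi] at this
    linarith
  | some t =>
    unfold SN.payoff
    rw [h]
    simp [hi]

/-- a network whose underlying graph has a source node is not
∃s-vulnerable: there is no Nash equilibrium `s`, expansion `S'` and improvement path in
`G(S')` from `s` ending in a Nash equilibrium `s'` with every player's payoff strictly
smaller than in `s`. -/
theorem stmt13 {V P : Type} [Fintype V] [DecidableEq V] (N : SN V P)
    (c0 : ℝ) (hc0 : 0 < c0) (hsrc : ∃ i, N.isSource i) :
    ∀ s, N.Nash c0 s → ∀ N' : SN V P, N.expansion N' →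
      ∀ s', N'.impPath c0 s s' → N'.Nash c0 s' →
        ¬ ∀ i, N'.payoff c0 s' i < N.payoff c0 s i := by
  intro s hs N' hexp s' _ hs' hall
  obtain ⟨i, hi⟩ := hsrc
  obtain ⟨j, t, hE, _⟩ := hexp
  have hi' : N'.isSource i := by
    intro k hk; exact hi k (hE ▸ hk)
  have h1 := sourceNashPayoff N c0 hc0 hi hs
  have h2 := sourceNashPayoff N' c0 hc0 hi' hs'
  have := hall i
  rw [h1, h2] at this
  exact lt_irrefl _ this
end
end
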